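/- Suppose Q̲ ≤ Q* ≤ Q̄ pointwise and for a state x every action u with Q̄(x,u) > V̲(x) := max_v Q̲(x,v) satisfies Q̄(x,u) - Q̲(x,u) ≤ ε. Then any action û maximizing Q̲(x,·) is ε-optimal at x: Q*(x,û) ≥ max_u Q*(x,u) - ε. -/
import Mathlib

/-- If every potentially-improving action at x has Q-bound gap at most ε, then
any maximizer of the lower bound is ε-optimal at x. -/
theorem lower_bound_maximizer_eps_optimal
    {X U : Type} [Fintype X] [Fintype U] [Nonempty X] [Nonempty U]
    (Qlow Qstar Qhigh : X × U → ℝ)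
    (hlow : ∀ p, Qlow p ≤ Qstar p) (hhigh : ∀ p, Qstar p ≤ Qhigh p)
    (ε : ℝ) (hε : 0 ≤ ε)
    (x : X)
    (hgap : ∀ u, (⨆ v, Qlow (x, v)) < Qhigh (x, u) → Qhigh (x, u) - Qlow (x, u) ≤ ε)
    (uhat : U) (huhat : ∀ u, Qlow (x, u) ≤ Qlow (x, uhat)) :
    (⨆ u, Qstar (x, u)) - ε ≤ Qstar (x, uhat) := by
  have hV : (⨆ v, Qlow (x, v)) = Qlow (x, uhat) := by
    refine le_antisymm (ciSup_le fun u => huhat u) ?_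
    exact le_ciSup (Set.Finite.bddAbove (Set.finite_range fun v => Qlow (x, v))) uhat
  rw [sub_le_iff_le_add]
  apply ciSup_le
  intro u
  by_cases h : (⨆ v, Qlow (x, v)) < Qhigh (x, u)
  · have := hgap u h
    calc Qstar (x, u) ≤ Qhigh (x, u) := hhigh _
      _ ≤ Qlow (x, u) + ε := by linarith
      _ ≤ Qlow (x, uhat) + ε := by linarith [huhat u]
      _ ≤ Qstar (x, uhat) + ε := by linarith [hlow (x, uhat)]
  · push_neg at h
    calc Qstar (x, u) ≤ Qhigh (x, u) := hhigh _
      _ ≤ Qlow (x, uhat) := hV ▸ h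
      _ ≤ Qstar (x, uhat) + ε := by linarith [hlow (x, uhat)]
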